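/- Let f be an elliptic Möbius transformation fixing the open unit disc 𝔻 of finite order m (so f^m is the identity and m is least with this property), and let f₁, f₂, … be non-constant holomorphic self-maps of 𝔻 such that Σₙ ρ(fₙ(a), f(a)) < ∞ and Σₙ ρ(fₙ(b), f(b)) < ∞ for two distinct points a, b ∈ 𝔻. Then there is a non-constant holomorphic self-map F of 𝔻 such that for each j ∈ {0, 1, …, m−1} the subsequence (F_{nm+j})ₙ of the left-composition sequence Fₙ = fₙ ∘ fₙ₋₁ ∘ ⋯ ∘ f₁ converges locally uniformly on 𝔻 to f^j ∘ F. -/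

import Mathlib

open Complex Set Filter Metric

/-- The open unit disc in the complex plane. -/
def unitDisc : Set ℂ := {z : ℂ | ‖z‖ < 1}

/-- Inverse hyperbolic tangent. -/
noncomputable def artanh (x : ℝ) : ℝ := (1 / 2) * Real.log ((1 + x) / (1 - x))

/-- The hyperbolic distance on the unit disc, induced by the Riemannian metric
`2|dz|/(1-|z|²)`. -/
noncomputable def hdist (z w : ℂ) : ℝ :=
  2 * artanh ‖(z - w) / (1 - (starRingEnd ℂ) w * z)‖

/-- Left compositions: `leftComp f n = f (n-1) ∘ ⋯ ∘ f 1 ∘ f 0`, so that `f k`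
plays the role of the `(k+1)`-st map `f_{k+1}` of the sequence. -/
def leftComp (f : ℕ → ℂ → ℂ) : ℕ → ℂ → ℂ
  | 0 => id
  | n + 1 => f n ∘ leftComp f n

/-- Right compositions: `rightComp g n = g 0 ∘ g 1 ∘ ⋯ ∘ g (n-1)`, so that `g k`
plays the role of the `(k+1)`-st map `g_{k+1}` of the sequence. -/
def rightComp (g : ℕ → ℂ → ℂ) : ℕ → ℂ → ℂ
  | 0 => id
  | n + 1 => rightComp g n ∘ g n


/-!
Put `f' = f^[m-1]`, the inverse of `f` on `𝔻`, and `εₙ = ρ(fₙ a, f a) + ρ(fₙ b, f b)`, which is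
summable. Conjugating by Möbius maps and applying Schwarz's lemma, a holomorphic self-map of `𝔻`
that moves the two points `a ≠ b` by little moves every point of a compact set by at most a
constant multiple of that; applied to `f' ∘ fₙ`, this gives `ρ(fₙ z, f z) = O(εₙ)` locally
uniformly. As `f` fixes a point `p`, the compositions `Fₙ` stay in hyperbolic balls about `p`, so
the successive hyperbolic distances of `Gₙ = f'^[n] ∘ Fₙ`, which equal `ρ(fₙ (Fₙ z), f (Fₙ z))`,
are summable locally uniformly, and `Gₙ → F`. Since `f^[m] = id`, `F_{nm+j} = f^[j] ∘ G_{nm+j}`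
tends to `f^[j] ∘ F`. For non-constancy, the limit built in the same way from the tail
`f_{N+1}, f_{N+2}, …` is uniformly close to the identity when `N` is large, and
`F = f'^[N] ∘ (that limit) ∘ F_N` is a composition of non-constant maps.
-/

open ComplexConjugate Topology

lemma unitDisc_eq_ball : unitDisc = ball (0 : ℂ) 1 := by
  ext z; simp [unitDisc]

lemma isOpen_unitDisc : IsOpen unitDisc := unitDisc_eq_ball ▸ isOpen_ball

lemma isPreconnected_unitDisc : IsPreconnected unitDisc :=
  unitDisc_eq_ball ▸ (convex_ball (0 : ℂ) 1).isPreconnected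

lemma zero_mem_unitDisc : (0 : ℂ) ∈ unitDisc := by simp [unitDisc]

lemma mem_unitDisc_of_norm_le {z : ℂ} {r : ℝ} (hz : ‖z‖ ≤ r) (hr : r < 1) : z ∈ unitDisc :=
  hz.trans_lt hr

lemma tendstoLocallyUniformlyOn_unitDisc_of_dist_le {F : ℕ → ℂ → ℂ} {f : ℂ → ℂ}
    (h : ∀ r < 1, ∃ u : ℕ → ℝ, Tendsto u atTop (𝓝 0) ∧ ∀ n z, ‖z‖ ≤ r → dist (f z) (F n z) ≤ u n) :
    TendstoLocallyUniformlyOn F f atTop unitDisc := by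
  rw [tendstoLocallyUniformlyOn_iff_forall_isCompact isOpen_unitDisc]
  intro K hK hKc
  obtain ⟨r, hr, hKr⟩ := exists_lt_subset_ball hKc.isClosed (unitDisc_eq_ball ▸ hK)
  obtain ⟨u, hu, hbound⟩ := h r hr
  rw [Metric.tendstoUniformlyOn_iff]
  intro η hη
  filter_upwards [hu.eventually (gt_mem_nhds hη)] with n hn z hz
  exact (hbound n z (mem_ball_zero_iff.mp (hKr hz)).le).trans_lt hn

lemma exists_mem_unitDisc_ne : ∃ u ∈ unitDisc, ∃ v ∈ unitDisc, u ≠ v :=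
  ⟨0, zero_mem_unitDisc, 1 / 2, by norm_num [unitDisc], by norm_num⟩

def IsHolSelfMap (h : ℂ → ℂ) : Prop :=
  DifferentiableOn ℂ h unitDisc ∧ MapsTo h unitDisc unitDisc

namespace IsHolSelfMap

lemma id : IsHolSelfMap id := ⟨differentiableOn_id, mapsTo_id _⟩

lemma comp {g h : ℂ → ℂ} (hg : IsHolSelfMap g) (hh : IsHolSelfMap h) : IsHolSelfMap (g ∘ h) :=
  ⟨hg.1.comp hh.1 hh.2, hg.2.comp hh.2⟩

lemma iterate {h : ℂ → ℂ} (hh : IsHolSelfMap h) (n : ℕ) : IsHolSelfMap h^[n] := by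
  induction n with
  | zero => exact IsHolSelfMap.id
  | succ n ih => rw [Function.iterate_succ']; exact hh.comp ih

end IsHolSelfMap

/-! ### Möbius maps and the Schwarz–Pick lemma -/

lemma one_sub_norm_mul_le_norm_one_sub (w z : ℂ) : 1 - ‖w‖ * ‖z‖ ≤ ‖1 - conj w * z‖ := by
  have := norm_sub_norm_le (1 : ℂ) (conj w * z)
  rwa [norm_one, norm_mul, Complex.norm_conj] at this

lemma one_sub_conj_mul_ne_zero {w z : ℂ} (hw : w ∈ unitDisc) (hz : ‖z‖ ≤ 1) :
    1 - conj w * z ≠ 0 := by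
  have hw : ‖w‖ < 1 := hw
  have : 0 < ‖1 - conj w * z‖ :=
    lt_of_lt_of_le (by nlinarith [norm_nonneg w, norm_nonneg z])
      (one_sub_norm_mul_le_norm_one_sub w z)
  exact norm_pos_iff.mp this

noncomputable def mobius (w z : ℂ) : ℂ := (z - w) / (1 - conj w * z)

lemma normSq_one_sub_conj_mul_sub (w z : ℂ) :
    normSq (1 - conj w * z) - normSq (z - w) = (1 - normSq z) * (1 - normSq w) := by
  simp only [normSq_apply, sub_re, sub_im, mul_re, mul_im, conj_re, conj_im, one_re, one_im]
  ring

lemma norm_mobius_lt_one {w z : ℂ} (hw : w ∈ unitDisc) (hz : z ∈ unitDisc) :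
    ‖mobius w z‖ < 1 := by
  have hw' : normSq w < 1 := by rw [normSq_eq_norm_sq]; nlinarith [norm_nonneg w, hw.out]
  have hz' : normSq z < 1 := by rw [normSq_eq_norm_sq]; nlinarith [norm_nonneg z, hz.out]
  have hden := one_sub_conj_mul_ne_zero hw (le_of_lt hz)
  rw [mobius, norm_div, div_lt_one (norm_pos_iff.mpr hden), ← sq_lt_sq₀ (norm_nonneg _)
    (norm_nonneg _), ← normSq_eq_norm_sq, ← normSq_eq_norm_sq]
  nlinarith [normSq_one_sub_conj_mul_sub w z]

lemma mobius_self (w : ℂ) : mobius w w = 0 := by simp [mobius]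

lemma mobius_zero_left (z : ℂ) : mobius 0 z = z := by simp [mobius]

lemma mobius_neg_zero (w : ℂ) : mobius (-w) 0 = w := by simp [mobius]

lemma mobius_neg_mobius {w z : ℂ} (hw : w ∈ unitDisc) (hz : z ∈ unitDisc) :
    mobius (-w) (mobius w z) = z := by
  have h₁ := one_sub_conj_mul_ne_zero hw (le_of_lt hz)
  have h₂ : 1 - conj w * w ≠ 0 := one_sub_conj_mul_ne_zero hw (le_of_lt hw)
  have hnum : (z - w) / (1 - conj w * z) + w = z * (1 - conj w * w) / (1 - conj w * z) := by
    rw [div_add' _ _ _ h₁]; ring_nf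
  have hden : 1 + conj w * ((z - w) / (1 - conj w * z))
      = (1 - conj w * w) / (1 - conj w * z) := by
    rw [mul_div_assoc', one_add_div h₁]; ring_nf
  simp only [mobius, map_neg, sub_neg_eq_add, neg_mul, hnum, hden]
  rw [div_div_div_cancel_right₀ h₁, mul_div_assoc, div_self h₂, mul_one]

lemma isHolSelfMap_mobius {w : ℂ} (hw : w ∈ unitDisc) : IsHolSelfMap (mobius w) := by
  refine ⟨fun z hz => ?_, fun z hz => norm_mobius_lt_one hw hz⟩
  exact ((differentiableAt_id.sub_const w).div ((differentiableAt_const _).sub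
    (differentiableAt_const _ |>.mul differentiableAt_id))
    (one_sub_conj_mul_ne_zero hw (le_of_lt hz))).differentiableWithinAt

noncomputable def pseudoHypDist (z w : ℂ) : ℝ := ‖mobius w z‖

lemma hdist_eq (z w : ℂ) : hdist z w = 2 * artanh (pseudoHypDist z w) := rfl

lemma pseudoHypDist_nonneg (z w : ℂ) : 0 ≤ pseudoHypDist z w := norm_nonneg _

lemma pseudoHypDist_self (z : ℂ) : pseudoHypDist z z = 0 := by
  simp [pseudoHypDist, mobius_self]

lemma pseudoHypDist_zero_right (z : ℂ) : pseudoHypDist z 0 = ‖z‖ := by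
  simp [pseudoHypDist, mobius_zero_left]

lemma pseudoHypDist_comm (z w : ℂ) : pseudoHypDist z w = pseudoHypDist w z := by
  have : ‖1 - conj w * z‖ = ‖1 - conj z * w‖ := by
    rw [← Complex.norm_conj (1 - conj w * z)]
    simp only [map_sub, map_one, map_mul, conj_conj, mul_comm]
  simp only [pseudoHypDist, mobius, norm_div, norm_sub_rev z w, this]

lemma pseudoHypDist_lt_one {z w : ℂ} (hz : z ∈ unitDisc) (hw : w ∈ unitDisc) :
    pseudoHypDist z w < 1 :=
  norm_mobius_lt_one hw hz

theorem pseudoHypDist_le_of_isHolSelfMap {h : ℂ → ℂ} (hh : IsHolSelfMap h) {z w : ℂ}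
    (hz : z ∈ unitDisc) (hw : w ∈ unitDisc) :
    pseudoHypDist (h z) (h w) ≤ pseudoHypDist z w := by
  have hw' : -w ∈ unitDisc := by simpa [unitDisc] using hw
  obtain ⟨hd, hm⟩ := (isHolSelfMap_mobius (hh.2 hw)).comp (hh.comp (isHolSelfMap_mobius hw'))
  rw [unitDisc_eq_ball] at hd hm
  have := Complex.norm_le_norm_of_mapsTo_ball hd (hm.mono_right ball_subset_closedBall)
    (by simp [mobius_neg_zero, mobius_self]) (norm_mobius_lt_one hw hz)
  simpa [pseudoHypDist, mobius_neg_mobius hw hz] using this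

theorem pseudoHypDist_apply_eq_of_leftInvOn {h h' : ℂ → ℂ} (hh : IsHolSelfMap h)
    (hh' : IsHolSelfMap h') (hinv : LeftInvOn h' h unitDisc) {z w : ℂ} (hz : z ∈ unitDisc)
    (hw : w ∈ unitDisc) : pseudoHypDist (h z) (h w) = pseudoHypDist z w := by
  refine le_antisymm (pseudoHypDist_le_of_isHolSelfMap hh hz hw) ?_
  calc pseudoHypDist z w = pseudoHypDist (h' (h z)) (h' (h w)) := by rw [hinv hz, hinv hw]
    _ ≤ pseudoHypDist (h z) (h w) := pseudoHypDist_le_of_isHolSelfMap hh' (hh.2 hz) (hh.2 hw)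

lemma pseudoHypDist_mobius {c z w : ℂ} (hc : c ∈ unitDisc) (hz : z ∈ unitDisc)
    (hw : w ∈ unitDisc) : pseudoHypDist (mobius c z) (mobius c w) = pseudoHypDist z w := by
  have hc' : -c ∈ unitDisc := by simpa [unitDisc] using hc
  exact pseudoHypDist_apply_eq_of_leftInvOn (isHolSelfMap_mobius hc) (isHolSelfMap_mobius hc')
    (fun _ hx => mobius_neg_mobius hc hx) hz hw

lemma norm_sub_le_two_mul_pseudoHypDist {z w : ℂ} (hz : z ∈ unitDisc) (hw : w ∈ unitDisc) :
    ‖z - w‖ ≤ 2 * pseudoHypDist z w := by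
  have hden : 0 < ‖1 - conj w * z‖ := norm_pos_iff.mpr (one_sub_conj_mul_ne_zero hw (le_of_lt hz))
  have hden2 : ‖1 - conj w * z‖ ≤ 2 := by
    calc ‖1 - conj w * z‖ ≤ ‖(1 : ℂ)‖ + ‖conj w * z‖ := norm_sub_le _ _
      _ ≤ 2 := by
        rw [norm_one, norm_mul, Complex.norm_conj]
        nlinarith [norm_nonneg w, norm_nonneg z, hz.out, hw.out]
  calc ‖z - w‖ = ‖z - w‖ / ‖1 - conj w * z‖ * ‖1 - conj w * z‖ :=
        (div_mul_cancel₀ _ hden.ne').symm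
    _ ≤ ‖z - w‖ / ‖1 - conj w * z‖ * 2 := mul_le_mul_of_nonneg_left hden2 (by positivity)
    _ = 2 * pseudoHypDist z w := by rw [pseudoHypDist, mobius, norm_div]; ring

lemma pseudoHypDist_le_norm_sub_div {z w : ℂ} (hz : ‖z‖ ≤ 1) (hw : w ∈ unitDisc) :
    pseudoHypDist z w ≤ ‖z - w‖ / (1 - ‖w‖) := by
  have hw' : ‖w‖ < 1 := hw
  have h : 1 - ‖w‖ ≤ ‖1 - conj w * z‖ :=
    (one_sub_norm_mul_le_norm_one_sub w z).trans' (by nlinarith [norm_nonneg w])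
  rw [pseudoHypDist, mobius, norm_div]
  exact div_le_div_of_nonneg_left (norm_nonneg _) (by linarith) h

/-- `tanh (x + y) = mobiusAdd (tanh x) (tanh y)` -/
noncomputable def mobiusAdd (p q : ℝ) : ℝ := (p + q) / (1 + p * q)

section mobiusAdd

variable {p q p' q' : ℝ}

lemma mobiusAdd_nonneg (hp : 0 ≤ p) (hq : 0 ≤ q) : 0 ≤ mobiusAdd p q := by
  unfold mobiusAdd; positivity

lemma mobiusAdd_lt_one (hp : 0 ≤ p) (hp1 : p < 1) (hq : 0 ≤ q) (hq1 : q < 1) :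
    mobiusAdd p q < 1 := by
  rw [mobiusAdd, div_lt_one (by positivity)]
  nlinarith

lemma mobiusAdd_le_add (hp : 0 ≤ p) (hq : 0 ≤ q) : mobiusAdd p q ≤ p + q := by
  rw [mobiusAdd, div_le_iff₀ (by positivity)]
  nlinarith [mul_nonneg (add_nonneg hp hq) (mul_nonneg hp hq)]

lemma mobiusAdd_le_mobiusAdd (hp : 0 ≤ p) (hq : 0 ≤ q) (hpp : p ≤ p') (hqq : q ≤ q')
    (hp1 : p' < 1) (hq1 : q' < 1) : mobiusAdd p q ≤ mobiusAdd p' q' := by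
  unfold mobiusAdd
  rw [div_le_div_iff₀ (by positivity) (by nlinarith)]
  nlinarith [mul_nonneg (sub_nonneg.2 hpp) (by nlinarith : (0 : ℝ) ≤ 1 - q * q'),
    mul_nonneg (sub_nonneg.2 hqq) (by nlinarith : (0 : ℝ) ≤ 1 - p * p')]

end mobiusAdd

lemma pseudoHypDist_le_mobiusAdd_norm {z w : ℂ} (hz : z ∈ unitDisc) (hw : w ∈ unitDisc) :
    pseudoHypDist z w ≤ mobiusAdd ‖z‖ ‖w‖ := by
  have hz1 : ‖z‖ < 1 := hz
  have hw1 : ‖w‖ < 1 := hw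
  set s := (conj w * z).re
  have hs : -(‖z‖ * ‖w‖) ≤ s := by
    have := (abs_le.mp ((abs_re_le_norm (conj w * z)))).1
    rwa [norm_mul, Complex.norm_conj, mul_comm] at this
  have hnum : ‖z - w‖ ^ 2 = ‖z‖ ^ 2 + ‖w‖ ^ 2 - 2 * s := by
    simp only [← normSq_eq_norm_sq, normSq_apply, s, sub_re, sub_im, mul_re, conj_re, conj_im]
    ring
  have hden : ‖1 - conj w * z‖ ^ 2 = 1 + ‖z‖ ^ 2 * ‖w‖ ^ 2 - 2 * s := by
    simp only [← normSq_eq_norm_sq, normSq_apply, s, sub_re, sub_im, mul_re, mul_im, conj_re,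
      conj_im, one_re, one_im]
    ring
  have hden0 : 0 < ‖1 - conj w * z‖ := norm_pos_iff.mpr (one_sub_conj_mul_ne_zero hw hz1.le)
  -- the difference of the squared cross-multiplied sides is `2 (1 - |z|²)(1 - |w|²)(|z||w| + s)`
  have hsq : (‖z - w‖ * (1 + ‖z‖ * ‖w‖)) ^ 2 ≤ ((‖z‖ + ‖w‖) * ‖1 - conj w * z‖) ^ 2 := by
    rw [mul_pow, mul_pow, hnum, hden]
    nlinarith [mul_nonneg (mul_nonneg (by linarith : 0 ≤ s + ‖z‖ * ‖w‖)
      (by nlinarith [norm_nonneg z] : (0 : ℝ) ≤ 1 - ‖z‖ ^ 2))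
      (by nlinarith [norm_nonneg w] : (0 : ℝ) ≤ 1 - ‖w‖ ^ 2)]
  rw [pseudoHypDist, mobius, norm_div, mobiusAdd, div_le_div_iff₀ hden0 (by positivity)]
  exact (pow_le_pow_iff_left₀ (by positivity) (by positivity) two_ne_zero).mp hsq

lemma pseudoHypDist_le_mobiusAdd {u v w : ℂ} (hu : u ∈ unitDisc) (hv : v ∈ unitDisc)
    (hw : w ∈ unitDisc) :
    pseudoHypDist u w ≤ mobiusAdd (pseudoHypDist u v) (pseudoHypDist v w) := by
  rw [← pseudoHypDist_mobius hv hu hw, pseudoHypDist_comm v w]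
  exact pseudoHypDist_le_mobiusAdd_norm (norm_mobius_lt_one hv hu) (norm_mobius_lt_one hv hw)

lemma pseudoHypDist_triangle {u v w : ℂ} (hu : u ∈ unitDisc) (hv : v ∈ unitDisc)
    (hw : w ∈ unitDisc) : pseudoHypDist u w ≤ pseudoHypDist u v + pseudoHypDist v w :=
  (pseudoHypDist_le_mobiusAdd hu hv hw).trans
    (mobiusAdd_le_add (pseudoHypDist_nonneg _ _) (pseudoHypDist_nonneg _ _))

/-! ### The hyperbolic distance -/

section artanh

variable {x y : ℝ}

lemma artanh_nonneg (h0 : 0 ≤ x) (h1 : x < 1) : 0 ≤ artanh x := by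
  have : 1 ≤ (1 + x) / (1 - x) := by rw [le_div_iff₀ (by linarith)]; linarith
  unfold artanh
  linarith [Real.log_nonneg this]

lemma artanh_le_artanh (h0 : 0 ≤ x) (hxy : x ≤ y) (h1 : y < 1) : artanh x ≤ artanh y := by
  have h : (1 + x) / (1 - x) ≤ (1 + y) / (1 - y) := by
    rw [div_le_div_iff₀ (by linarith) (by linarith)]; nlinarith
  unfold artanh
  linarith [Real.log_le_log (div_pos (by linarith) (by linarith)) h]

lemma self_le_two_mul_artanh (h0 : 0 ≤ x) (h1 : x < 1) : x ≤ 2 * artanh x := by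
  unfold artanh
  rw [Real.log_div (by linarith) (by linarith)]
  linarith [Real.log_le_sub_one_of_pos (by linarith : (0 : ℝ) < 1 - x),
    Real.log_nonneg (by linarith : (1 : ℝ) ≤ 1 + x)]

lemma two_mul_artanh_le (h0 : 0 ≤ x) (h1 : x < 1) : 2 * artanh x ≤ 2 * x / (1 - x) := by
  have h := Real.log_le_sub_one_of_pos (div_pos (by linarith : 0 < 1 + x) (by linarith : 0 < 1 - x))
  rw [div_sub_one (by linarith)] at h
  unfold artanh
  rw [show 2 * x / (1 - x) = (1 + x - (1 - x)) / (1 - x) by ring]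
  linarith

lemma le_of_two_mul_artanh_le {R : ℝ} (h0 : 0 ≤ x) (h1 : x < 1) (h : 2 * artanh x ≤ R) :
    x ≤ (Real.exp R - 1) / (Real.exp R + 1) := by
  have hlog : Real.log ((1 + x) / (1 - x)) ≤ R := by unfold artanh at h; linarith
  have hexp : (1 + x) / (1 - x) ≤ Real.exp R :=
    (Real.log_le_iff_le_exp (div_pos (by linarith) (by linarith))).mp hlog
  rw [div_le_iff₀ (by linarith)] at hexp
  rw [le_div_iff₀ (by positivity)]
  linarith

lemma artanh_mobiusAdd (hx0 : 0 ≤ x) (hx1 : x < 1) (hy0 : 0 ≤ y) (hy1 : y < 1) :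
    artanh (mobiusAdd x y) = artanh x + artanh y := by
  have h : (1 + mobiusAdd x y) / (1 - mobiusAdd x y) = (1 + x) / (1 - x) * ((1 + y) / (1 - y)) := by
    have hxy : 1 + x * y ≠ 0 := by positivity
    have e₁ : 1 + mobiusAdd x y = (1 + x) * (1 + y) / (1 + x * y) := by
      unfold mobiusAdd; field_simp; ring
    have e₂ : 1 - mobiusAdd x y = (1 - x) * (1 - y) / (1 + x * y) := by
      unfold mobiusAdd; field_simp; ring
    rw [e₁, e₂, div_div_div_cancel_right₀ hxy, mul_div_mul_comm]
  unfold artanh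
  rw [h, Real.log_mul (div_pos (by linarith) (by linarith)).ne'
    (div_pos (by linarith) (by linarith)).ne']
  ring

end artanh

section hdist

variable {u v w z : ℂ}

lemma hdist_self (z : ℂ) : hdist z z = 0 := by simp [hdist_eq, pseudoHypDist_self, artanh]

lemma hdist_comm (z w : ℂ) : hdist z w = hdist w z := by
  rw [hdist_eq, hdist_eq, pseudoHypDist_comm]

lemma hdist_zero_right (z : ℂ) : hdist z 0 = 2 * artanh ‖z‖ := by
  rw [hdist_eq, pseudoHypDist_zero_right]

lemma hdist_nonneg (hz : z ∈ unitDisc) (hw : w ∈ unitDisc) : 0 ≤ hdist z w := by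
  rw [hdist_eq]
  linarith [artanh_nonneg (pseudoHypDist_nonneg z w) (pseudoHypDist_lt_one hz hw)]

lemma pseudoHypDist_le_hdist (hz : z ∈ unitDisc) (hw : w ∈ unitDisc) :
    pseudoHypDist z w ≤ hdist z w :=
  self_le_two_mul_artanh (pseudoHypDist_nonneg z w) (pseudoHypDist_lt_one hz hw)

lemma dist_le_two_mul_hdist (hz : z ∈ unitDisc) (hw : w ∈ unitDisc) :
    dist z w ≤ 2 * hdist z w := by
  rw [dist_eq_norm]
  linarith [norm_sub_le_two_mul_pseudoHypDist hz hw, pseudoHypDist_le_hdist hz hw]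

lemma hdist_le_four_mul_pseudoHypDist (hz : z ∈ unitDisc) (hw : w ∈ unitDisc)
    (h : pseudoHypDist z w ≤ 1 / 2) : hdist z w ≤ 4 * pseudoHypDist z w := by
  have h0 := pseudoHypDist_nonneg z w
  have h1 := two_mul_artanh_le h0 (pseudoHypDist_lt_one hz hw)
  rw [hdist_eq]
  refine h1.trans ?_
  rw [div_le_iff₀ (by linarith)]
  nlinarith

lemma hdist_triangle (hu : u ∈ unitDisc) (hv : v ∈ unitDisc) (hw : w ∈ unitDisc) :
    hdist u w ≤ hdist u v + hdist v w := by
  have huv := pseudoHypDist_lt_one hu hv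
  have hvw := pseudoHypDist_lt_one hv hw
  have h0 := pseudoHypDist_nonneg
  have h := artanh_le_artanh (h0 u w) (pseudoHypDist_le_mobiusAdd hu hv hw)
    (mobiusAdd_lt_one (h0 u v) huv (h0 v w) hvw)
  rw [artanh_mobiusAdd (h0 u v) huv (h0 v w) hvw] at h
  simp only [hdist_eq]
  linarith

theorem hdist_le_of_isHolSelfMap {h : ℂ → ℂ} (hh : IsHolSelfMap h) (hz : z ∈ unitDisc)
    (hw : w ∈ unitDisc) : hdist (h z) (h w) ≤ hdist z w := by
  simp only [hdist_eq]
  linarith [artanh_le_artanh (pseudoHypDist_nonneg _ _)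
    (pseudoHypDist_le_of_isHolSelfMap hh hz hw) (pseudoHypDist_lt_one hz hw)]

theorem hdist_apply_eq_of_leftInvOn {h h' : ℂ → ℂ} (hh : IsHolSelfMap h) (hh' : IsHolSelfMap h')
    (hinv : LeftInvOn h' h unitDisc) (hz : z ∈ unitDisc) (hw : w ∈ unitDisc) :
    hdist (h z) (h w) = hdist z w := by
  rw [hdist_eq, hdist_eq, pseudoHypDist_apply_eq_of_leftInvOn hh hh' hinv hz hw]

lemma exists_hdist_le_of_norm_le (hw : w ∈ unitDisc) {r : ℝ} (hr : r < 1) :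
    ∃ R, ∀ z ∈ unitDisc, ‖z‖ ≤ r → hdist z w ≤ R := by
  refine ⟨2 * artanh r + hdist 0 w, fun z hz hzr => ?_⟩
  have := hdist_triangle hz zero_mem_unitDisc hw
  rw [hdist_zero_right] at this
  linarith [artanh_le_artanh (norm_nonneg z) hzr hr]

lemma exists_norm_le_of_hdist_le (hw : w ∈ unitDisc) (R : ℝ) :
    ∃ r < 1, ∀ z ∈ unitDisc, hdist z w ≤ R → ‖z‖ ≤ r := by
  set R' := R + hdist w 0
  refine ⟨(Real.exp R' - 1) / (Real.exp R' + 1), ?_, fun z hz hzR => ?_⟩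
  · rw [div_lt_one (by positivity)]; linarith
  · refine le_of_two_mul_artanh_le (norm_nonneg z) hz ?_
    rw [← hdist_zero_right]
    linarith [hdist_triangle hz hw zero_mem_unitDisc]

end hdist

/-! ### Self-maps that almost fix two points -/

lemma norm_mobius_sub_self_le {c z : ℂ} (hc : ‖c‖ ≤ 1 / 2) (hz : ‖z‖ ≤ 1) :
    ‖mobius c z - z‖ ≤ 4 * ‖c‖ := by
  have hden : 1 - ‖c‖ ≤ ‖1 - conj c * z‖ :=
    (one_sub_norm_mul_le_norm_one_sub c z).trans' (by nlinarith [norm_nonneg c])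
  have e : mobius c z - z = (conj c * z ^ 2 - c) / (1 - conj c * z) := by
    rw [mobius, div_sub' (norm_pos_iff.mp (by linarith))]; ring_nf
  have hnum : ‖conj c * z ^ 2 - c‖ ≤ 2 * ‖c‖ := by
    calc ‖conj c * z ^ 2 - c‖ ≤ ‖conj c * z ^ 2‖ + ‖c‖ := norm_sub_le _ _
      _ = ‖c‖ * ‖z‖ ^ 2 + ‖c‖ := by rw [norm_mul, norm_pow, Complex.norm_conj]
      _ ≤ 2 * ‖c‖ := by
        nlinarith [mul_le_mul_of_nonneg_left (pow_le_one₀ (n := 2) (norm_nonneg z) hz)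
          (norm_nonneg c)]
  rw [e, norm_div, div_le_iff₀ (by linarith)]
  nlinarith [norm_nonneg c]

lemma IsHolSelfMap.exists_eq_mul {H : ℂ → ℂ} (hH : IsHolSelfMap H) (h0 : H 0 = 0) :
    ∃ Φ : ℂ → ℂ, DifferentiableOn ℂ Φ unitDisc ∧ (∀ ζ ∈ unitDisc, ‖Φ ζ‖ ≤ 1) ∧
      ∀ ζ, H ζ = ζ * Φ ζ := by
  obtain ⟨hd, hm⟩ := hH
  refine ⟨dslope H 0, (differentiableOn_dslope (isOpen_unitDisc.mem_nhds zero_mem_unitDisc)).2 hd,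
    fun ζ hζ => ?_, fun ζ => ?_⟩
  · rw [unitDisc_eq_ball] at hd hm hζ
    have hm' : MapsTo H (ball 0 1) (closedBall (H 0) 1) := by
      rw [h0]; exact hm.mono_right ball_subset_closedBall
    simpa using Complex.norm_dslope_le_div_of_mapsTo_ball hd hm' hζ
  · rcases eq_or_ne ζ 0 with rfl | hζ
    · simp [h0]
    · rw [dslope_of_ne _ hζ, slope_def_field, h0, sub_zero, sub_zero, mul_div_cancel₀ _ hζ]

lemma norm_sub_one_le_of_pseudoHypDist_le {U V : ℂ} (hU : U ∈ unitDisc) (hV : V ∈ unitDisc)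
    {t : ℝ} (ht : pseudoHypDist U V ≤ t) (ht1 : t < 1) :
    ‖U - 1‖ ≤ (1 + t) / (1 - t) * ‖V - 1‖ := by
  have hV1 : ‖V‖ < 1 := hV
  have hden : 0 < ‖1 - conj V * U‖ := norm_pos_iff.mpr (one_sub_conj_mul_ne_zero hV hU.out.le)
  have ht0 : 0 ≤ t := (pseudoHypDist_nonneg U V).trans ht
  have hUV : ‖U - V‖ ≤ t * ‖1 - conj V * U‖ := by
    rwa [pseudoHypDist, mobius, norm_div, div_le_iff₀ hden] at ht
  -- `1 - |V|² ≤ 2 (1 - |V|) ≤ 2 |1 - V|`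
  have hsplit : ‖1 - conj V * U‖ ≤ 2 * ‖V - 1‖ + ‖U - V‖ := by
    have e : 1 - conj V * U = ((1 - ‖V‖ ^ 2 : ℝ) : ℂ) + conj V * (V - U) := by
      rw [Complex.ofReal_sub, Complex.ofReal_one, Complex.ofReal_pow, ← Complex.mul_conj',
        mul_comm V]
      ring
    have h₁ : ‖((1 - ‖V‖ ^ 2 : ℝ) : ℂ)‖ ≤ 2 * ‖V - 1‖ := by
      rw [Complex.norm_real, Real.norm_of_nonneg (by nlinarith [norm_nonneg V])]
      nlinarith [norm_sub_norm_le 1 V, norm_sub_rev V 1, norm_nonneg V, norm_one (α := ℂ)]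
    have h₂ : ‖conj V * (V - U)‖ ≤ ‖U - V‖ := by
      rw [norm_mul, Complex.norm_conj, norm_sub_rev]
      exact mul_le_of_le_one_left (norm_nonneg _) hV1.le
    rw [e]
    exact (norm_add_le _ _).trans (add_le_add h₁ h₂)
  have hUV' : ‖U - V‖ ≤ 2 * t / (1 - t) * ‖V - 1‖ := by
    rw [div_mul_eq_mul_div, le_div_iff₀ (by linarith)]
    nlinarith [mul_le_mul_of_nonneg_left hsplit ht0]
  calc ‖U - 1‖ ≤ ‖U - V‖ + ‖V - 1‖ := norm_sub_le_norm_sub_add_norm_sub U V 1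
    _ ≤ 2 * t / (1 - t) * ‖V - 1‖ + ‖V - 1‖ := by linarith
    _ = (1 + t) / (1 - t) * ‖V - 1‖ := by
        rw [show (1 + t) / (1 - t) = 2 * t / (1 - t) + 1 by
          rw [div_add_one (by linarith)]; congr 1; ring]
        ring

/-- By Schwarz–Pick, or by the maximum principle if `Φ` touches the unit circle. -/
lemma norm_apply_sub_one_le {Φ : ℂ → ℂ} (hΦ : DifferentiableOn ℂ Φ unitDisc)
    (hΦ1 : ∀ ζ ∈ unitDisc, ‖Φ ζ‖ ≤ 1) {v w : ℂ} (hv : v ∈ unitDisc) (hw : w ∈ unitDisc) {t : ℝ}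
    (ht : pseudoHypDist w v ≤ t) (ht1 : t < 1) :
    ‖Φ w - 1‖ ≤ (1 + t) / (1 - t) * ‖Φ v - 1‖ := by
  by_cases hmaps : MapsTo Φ unitDisc unitDisc
  · exact norm_sub_one_le_of_pseudoHypDist_le (hmaps hw) (hmaps hv)
      ((pseudoHypDist_le_of_isHolSelfMap ⟨hΦ, hmaps⟩ hw hv).trans ht) ht1
  · obtain ⟨ζ, hζ, hζ1⟩ : ∃ ζ ∈ unitDisc, ¬ ‖Φ ζ‖ < 1 := by
      simpa [MapsTo, unitDisc] using hmaps
    have hmax : IsMaxOn (norm ∘ Φ) unitDisc ζ := fun x hx =>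
      (hΦ1 x hx).trans (not_lt.mp hζ1)
    have hconst := Complex.eqOn_of_isPreconnected_of_isMaxOn_norm isPreconnected_unitDisc
      isOpen_unitDisc hΦ hζ hmax
    have ht0 : 0 ≤ t := (pseudoHypDist_nonneg w v).trans ht
    rw [(hconst hw).trans (hconst hv).symm]
    exact le_mul_of_one_le_left (norm_nonneg _) ((one_le_div (by linarith)).mpr (by linarith))

lemma pseudoHypDist_le_of_mobius_eq_mul {c X w u : ℂ} (hc : ‖c‖ ≤ 1 / 2) (hX : X ∈ unitDisc)
    (hw : w ∈ unitDisc) (hu : ‖u‖ ≤ 1) (h : mobius c X = w * u) :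
    pseudoHypDist X w ≤ (4 * ‖c‖ + ‖u - 1‖) / (1 - ‖w‖) := by
  have hcD : c ∈ unitDisc := show ‖c‖ < 1 by linarith
  have hw1 : ‖w‖ < 1 := hw
  have hY : ‖w * u‖ ≤ ‖w‖ := by rw [norm_mul]; exact mul_le_of_le_one_right (norm_nonneg w) hu
  have hYD : w * u ∈ unitDisc := hY.trans_lt hw1
  have hXY : X = mobius (-c) (w * u) := by rw [← h, mobius_neg_mobius hcD hX]
  have h₁ : pseudoHypDist X (w * u) ≤ 4 * ‖c‖ / (1 - ‖w‖) := by
    refine (pseudoHypDist_le_norm_sub_div hX.out.le hYD).trans ?_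
    rw [hXY]
    have := norm_mobius_sub_self_le (c := -c) (by simpa using hc) hYD.out.le
    rw [norm_neg] at this
    exact div_le_div₀ (by positivity) this (by linarith) (by linarith)
  have h₂ : pseudoHypDist (w * u) w ≤ ‖u - 1‖ / (1 - ‖w‖) := by
    refine (pseudoHypDist_le_norm_sub_div hYD.out.le hw).trans ?_
    rw [← mul_sub_one, norm_mul]
    exact div_le_div_of_nonneg_right (mul_le_of_le_one_left (norm_nonneg _) hw1.le) (by linarith)
  calc pseudoHypDist X w ≤ pseudoHypDist X (w * u) + pseudoHypDist (w * u) w :=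
        pseudoHypDist_triangle hX hYD hw
    _ ≤ (4 * ‖c‖ + ‖u - 1‖) / (1 - ‖w‖) := by rw [add_div]; exact add_le_add h₁ h₂

/-- Normalise `k` by the automorphism `mobius (k 0)` and apply Schwarz's lemma: the factor `Φ`
is close to `1` at `b`, hence near `w`, and `k` is close to the identity there. -/
lemma pseudoHypDist_apply_le_of_norm_apply_zero_le {k : ℂ → ℂ} (hk : IsHolSelfMap k) {b w : ℂ}
    (hb : b ∈ unitDisc) (hb0 : b ≠ 0) (hw : w ∈ unitDisc) {δ t : ℝ} (h0 : ‖k 0‖ ≤ δ)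
    (hδ : δ ≤ 1 / 2) (hkb : pseudoHypDist (k b) b ≤ δ) (ht : pseudoHypDist w b ≤ t)
    (ht1 : t < 1) :
    pseudoHypDist (k w) w ≤ (4 + 6 * (1 + t) / ((1 - t) * ‖b‖)) * δ / (1 - ‖w‖) := by
  have hc : k 0 ∈ unitDisc := hk.2 zero_mem_unitDisc
  have hc2 : ‖k 0‖ ≤ 1 / 2 := h0.trans hδ
  have hb1 : 0 < ‖b‖ := norm_pos_iff.mpr hb0
  have ht0 : 0 ≤ t := (pseudoHypDist_nonneg w b).trans ht
  obtain ⟨Φ, hΦ, hΦ1, hHΦ⟩ := ((isHolSelfMap_mobius hc).comp hk).exists_eq_mul (mobius_self _)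
  have hΦb : ‖Φ b - 1‖ ≤ 6 * δ / ‖b‖ := by
    rw [le_div_iff₀ hb1, mul_comm, ← norm_mul, mul_sub, mul_one, ← hHΦ, Function.comp_apply,
      ← sub_add_sub_cancel _ (k b)]
    refine (norm_add_le _ _).trans ?_
    linarith [norm_mobius_sub_self_le hc2 (hk.2 hb).out.le,
      norm_sub_le_two_mul_pseudoHypDist (hk.2 hb) hb]
  have hΦw : ‖Φ w - 1‖ ≤ 6 * (1 + t) / ((1 - t) * ‖b‖) * δ := by
    refine (norm_apply_sub_one_le hΦ hΦ1 hb hw ht ht1).trans ?_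
    calc (1 + t) / (1 - t) * ‖Φ b - 1‖ ≤ (1 + t) / (1 - t) * (6 * δ / ‖b‖) :=
          mul_le_mul_of_nonneg_left hΦb (div_nonneg (by linarith) (by linarith))
      _ = 6 * (1 + t) / ((1 - t) * ‖b‖) * δ := by
          rw [div_mul_div_comm, mul_div_assoc, mul_div_assoc]; ring
  refine (pseudoHypDist_le_of_mobius_eq_mul hc2 (hk.2 hw) hw (hΦ1 w hw) (hHΦ w)).trans ?_
  refine div_le_div_of_nonneg_right ?_ (by linarith [hw.out])
  linarith

lemma exists_pseudoHypDist_apply_le_mul_of_zero {b : ℂ} (hb : b ∈ unitDisc) (hb0 : b ≠ 0) {r : ℝ}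
    (hr : r < 1) :
    ∃ C, ∀ k : ℂ → ℂ, IsHolSelfMap k → ∀ δ, ‖k 0‖ ≤ δ → pseudoHypDist (k b) b ≤ δ →
      ∀ w ∈ unitDisc, ‖w‖ ≤ r → pseudoHypDist (k w) w ≤ C * δ := by
  have hr' : max r 0 < 1 := max_lt hr one_pos
  set t := mobiusAdd (max r 0) ‖b‖
  have ht0 : 0 ≤ t := mobiusAdd_nonneg (le_max_right _ _) (norm_nonneg b)
  have ht1 : t < 1 := mobiusAdd_lt_one (le_max_right _ _) hr' (norm_nonneg _) hb
  set K := 4 + 6 * (1 + t) / ((1 - t) * ‖b‖)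
  have hK : 0 ≤ K :=
    add_nonneg (by norm_num) (div_nonneg (by linarith) (mul_nonneg (by linarith) (norm_nonneg _)))
  refine ⟨max 2 (K / (1 - max r 0)), fun k hk δ hk0 hkb w hw hwr => ?_⟩
  have hδ0 : 0 ≤ δ := (norm_nonneg _).trans hk0
  have hwr' : ‖w‖ ≤ max r 0 := le_max_of_le_left hwr
  rcases lt_or_ge (1 / 2) δ with hδ | hδ
  · calc pseudoHypDist (k w) w ≤ 2 * δ := by linarith [pseudoHypDist_lt_one (hk.2 hw) hw]
      _ ≤ max 2 (K / (1 - max r 0)) * δ := mul_le_mul_of_nonneg_right (le_max_left _ _) hδ0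
  have hwb : pseudoHypDist w b ≤ t :=
    (pseudoHypDist_le_mobiusAdd_norm hw hb).trans
      (mobiusAdd_le_mobiusAdd (norm_nonneg _) (norm_nonneg _) hwr' le_rfl hr' hb)
  calc pseudoHypDist (k w) w ≤ K * δ / (1 - ‖w‖) :=
        pseudoHypDist_apply_le_of_norm_apply_zero_le hk hb hb0 hw hk0 hδ hkb hwb ht1
    _ ≤ K * δ / (1 - max r 0) :=
        div_le_div_of_nonneg_left (by positivity) (by linarith) (by linarith)
    _ = K / (1 - max r 0) * δ := by ring
    _ ≤ max 2 (K / (1 - max r 0)) * δ := mul_le_mul_of_nonneg_right (le_max_right _ _) hδ0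

/-- Conjugate by `mobius a` to move `a` to the origin. -/
theorem exists_pseudoHypDist_apply_le_mul {a b : ℂ} (ha : a ∈ unitDisc) (hb : b ∈ unitDisc)
    (hab : a ≠ b) {r : ℝ} (hr : r < 1) :
    ∃ C, ∀ h : ℂ → ℂ, IsHolSelfMap h → ∀ δ, pseudoHypDist (h a) a ≤ δ →
      pseudoHypDist (h b) b ≤ δ → ∀ z ∈ unitDisc, ‖z‖ ≤ r → pseudoHypDist (h z) z ≤ C * δ := by
  have ha' : -a ∈ unitDisc := by simpa [unitDisc] using ha
  have hb' : mobius a b ∈ unitDisc := norm_mobius_lt_one ha hb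
  have hb'0 : mobius a b ≠ 0 := fun h => hab (by
    simpa [mobius_neg_zero, mobius_neg_mobius ha hb] using congrArg (mobius (-a)) h.symm)
  have hr' : max r 0 < 1 := max_lt hr one_pos
  set ρ := mobiusAdd (max r 0) ‖a‖
  obtain ⟨C, hC⟩ := exists_pseudoHypDist_apply_le_mul_of_zero hb' hb'0 (r := ρ)
    (mobiusAdd_lt_one (le_max_right _ _) hr' (norm_nonneg a) ha)
  refine ⟨C, fun h hh δ hδa hδb z hz hzr => ?_⟩
  set k := mobius a ∘ h ∘ mobius (-a)
  have hk : IsHolSelfMap k := (isHolSelfMap_mobius ha).comp (hh.comp (isHolSelfMap_mobius ha'))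
  have hkconj : ∀ x ∈ unitDisc, k (mobius a x) = mobius a (h x) := fun x hx => by
    simp only [k, Function.comp_apply, mobius_neg_mobius ha hx]
  have hk0 : ‖k 0‖ ≤ δ := by simpa [k, mobius_neg_zero, pseudoHypDist] using hδa
  have hkb : pseudoHypDist (k (mobius a b)) (mobius a b) ≤ δ := by
    rwa [hkconj b hb, pseudoHypDist_mobius ha (hh.2 hb) hb]
  have hzρ : ‖mobius a z‖ ≤ ρ :=
    (pseudoHypDist_le_mobiusAdd_norm hz ha).trans (mobiusAdd_le_mobiusAdd (norm_nonneg z)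
      (norm_nonneg a) (le_max_of_le_left hzr) le_rfl hr' ha)
  have := hC k hk δ hk0 hkb (mobius a z) (norm_mobius_lt_one ha hz) hzρ
  rwa [hkconj z hz, pseudoHypDist_mobius ha (hh.2 hz) hz] at this

theorem exists_hdist_apply_le_mul {a b : ℂ} (ha : a ∈ unitDisc) (hb : b ∈ unitDisc) (hab : a ≠ b)
    {r : ℝ} (hr : r < 1) :
    ∃ C, ∀ h : ℂ → ℂ, IsHolSelfMap h → ∀ z ∈ unitDisc, ‖z‖ ≤ r →
      hdist (h z) z ≤ C * (hdist (h a) a + hdist (h b) b) := by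
  obtain ⟨C₀, hC₀⟩ := exists_pseudoHypDist_apply_le_mul ha hb hab hr
  obtain ⟨R, hR⟩ := exists_hdist_le_of_norm_le ha hr
  set C₁ := max C₀ 1
  refine ⟨max (4 * C₁) (4 * R * C₁ + 1), fun h hh z hz hzr => ?_⟩
  set Δ := hdist (h a) a + hdist (h b) b
  have hΔa : hdist (h a) a ≤ Δ := le_add_of_nonneg_right (hdist_nonneg (hh.2 hb) hb)
  have hΔb : hdist (h b) b ≤ Δ := le_add_of_nonneg_left (hdist_nonneg (hh.2 ha) ha)
  have hΔ0 : 0 ≤ Δ := (hdist_nonneg (hh.2 ha) ha).trans hΔa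
  have hpd : pseudoHypDist (h z) z ≤ C₁ * Δ :=
    (hC₀ h hh Δ ((pseudoHypDist_le_hdist (hh.2 ha) ha).trans hΔa)
      ((pseudoHypDist_le_hdist (hh.2 hb) hb).trans hΔb) z hz hzr).trans
      (mul_le_mul_of_nonneg_right (le_max_left _ _) hΔ0)
  rcases le_or_gt (C₁ * Δ) (1 / 2) with hsmall | hlarge
  · calc hdist (h z) z ≤ 4 * pseudoHypDist (h z) z :=
          hdist_le_four_mul_pseudoHypDist (hh.2 hz) hz (hpd.trans hsmall)
      _ ≤ 4 * C₁ * Δ := by linarith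
      _ ≤ max (4 * C₁) (4 * R * C₁ + 1) * Δ := mul_le_mul_of_nonneg_right (le_max_left _ _) hΔ0
  · have hza := hR z hz hzr
    have hR0 : 0 ≤ R := (hdist_nonneg hz ha).trans hza
    calc hdist (h z) z ≤ hdist (h z) (h a) + hdist (h a) a + hdist a z := by
          linarith [hdist_triangle (hh.2 hz) (hh.2 ha) hz, hdist_triangle (hh.2 ha) ha hz]
      _ ≤ 2 * R + Δ := by
          linarith [hdist_le_of_isHolSelfMap hh hz ha, hdist_comm a z]
      _ ≤ (4 * R * C₁ + 1) * Δ := by nlinarith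
      _ ≤ max (4 * C₁) (4 * R * C₁ + 1) * Δ := mul_le_mul_of_nonneg_right (le_max_right _ _) hΔ0

theorem exists_hdist_le_mul_of_invOn {f f' : ℂ → ℂ} (hf : IsHolSelfMap f)
    (hf' : IsHolSelfMap f') (hinv : InvOn f' f unitDisc unitDisc) {a b : ℂ} (ha : a ∈ unitDisc)
    (hb : b ∈ unitDisc) (hab : a ≠ b) {r : ℝ} (hr : r < 1) :
    ∃ C, ∀ g : ℂ → ℂ, IsHolSelfMap g → ∀ z ∈ unitDisc, ‖z‖ ≤ r →
      hdist (g z) (f z) ≤ C * (hdist (g a) (f a) + hdist (g b) (f b)) := by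
  obtain ⟨C, hC⟩ := exists_hdist_apply_le_mul ha hb hab hr
  have key : ∀ g, IsHolSelfMap g → ∀ u ∈ unitDisc, hdist ((f' ∘ g) u) u = hdist (g u) (f u) :=
    fun g hg u hu => calc
      hdist (f' (g u)) u = hdist (f' (g u)) (f' (f u)) := by rw [hinv.1 hu]
      _ = hdist (g u) (f u) := hdist_apply_eq_of_leftInvOn hf' hf hinv.2 (hg.2 hu) (hf.2 hu)
  refine ⟨C, fun g hg z hz hzr => ?_⟩
  have := hC (f' ∘ g) (hf'.comp hg) z hz hzr
  rwa [key g hg z hz, key g hg a ha, key g hg b hb] at this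

/-! ### Left compositions -/

lemma Set.LeftInvOn.iterate {α : Type*} {f f' : α → α} {s : Set α} (h : LeftInvOn f' f s)
    (hf : MapsTo f s s) (n : ℕ) : LeftInvOn f'^[n] f^[n] s := by
  induction n with
  | zero => exact leftInvOn_id s
  | succ n ih =>
    rw [Function.iterate_succ' f', Function.iterate_succ f]
    exact h.comp ih hf

lemma IsHolSelfMap.leftComp {g : ℕ → ℂ → ℂ} (hg : ∀ n, IsHolSelfMap (g n)) (n : ℕ) :
    IsHolSelfMap (leftComp g n) := by
  induction n with
  | zero => exact IsHolSelfMap.id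
  | succ n ih => exact (hg n).comp ih

lemma leftComp_add (g : ℕ → ℂ → ℂ) (N n : ℕ) :
    leftComp g (N + n) = leftComp (fun k => g (N + k)) n ∘ leftComp g N := by
  induction n with
  | zero => rfl
  | succ n ih => rw [← add_assoc, leftComp, ih]; rfl

/-- `h '' 𝔻` is open by the open mapping theorem, so `g` would be constant near a point of it,
hence everywhere. -/
lemma exists_ne_comp {g h : ℂ → ℂ} (hg : DifferentiableOn ℂ g unitDisc) (hh : IsHolSelfMap h)
    (hg' : ∃ u ∈ unitDisc, ∃ v ∈ unitDisc, g u ≠ g v)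
    (hh' : ∃ u ∈ unitDisc, ∃ v ∈ unitDisc, h u ≠ h v) :
    ∃ u ∈ unitDisc, ∃ v ∈ unitDisc, g (h u) ≠ g (h v) := by
  obtain ⟨u, hu, v, hv, huv⟩ := hh'
  by_contra! hconst
  have hopen : IsOpen (h '' unitDisc) :=
    ((hh.1.analyticOnNhd isOpen_unitDisc).is_constant_or_isOpen
      isPreconnected_unitDisc).resolve_left
      (fun ⟨w, hw⟩ => huv ((hw u hu).trans (hw v hv).symm)) _ subset_rfl isOpen_unitDisc
  have hev : g =ᶠ[𝓝 (h u)] fun _ => g (h u) := by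
    filter_upwards [hopen.mem_nhds (mem_image_of_mem h hu)]
    rintro _ ⟨x, hx, rfl⟩
    exact hconst x hx u hu
  have := (hg.analyticOnNhd isOpen_unitDisc).eqOn_of_preconnected_of_eventuallyEq
    analyticOnNhd_const isPreconnected_unitDisc (hh.2 hu) hev
  obtain ⟨u', hu', v', hv', hne⟩ := hg'
  exact hne ((this hu').trans (this hv').symm)

/-! ### Normalised compositions -/

structure IsEllipticAut (f f' : ℂ → ℂ) (p : ℂ) : Prop where
  isHolSelfMap : IsHolSelfMap f
  isHolSelfMap_inv : IsHolSelfMap f'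
  invOn : InvOn f' f unitDisc unitDisc
  mem : p ∈ unitDisc
  apply_eq : f p = p

structure SummablyApprox (g : ℕ → ℂ → ℂ) (f : ℂ → ℂ) (ε : ℕ → ℝ) : Prop where
  isHolSelfMap : ∀ n, IsHolSelfMap (g n)
  nonneg : ∀ n, 0 ≤ ε n
  summable : Summable ε
  hdist_le : ∀ r < 1, ∃ C, ∀ n, ∀ z ∈ unitDisc, ‖z‖ ≤ r → hdist (g n z) (f z) ≤ C * ε n

/-- With `f' = f⁻¹` this undoes the rotation `f^[n]` that the left compositions of `g k ≈ f`
pick up. -/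
def normalizedComp (f' : ℂ → ℂ) (g : ℕ → ℂ → ℂ) (N n : ℕ) : ℂ → ℂ :=
  f'^[n] ∘ leftComp (fun k => g (N + k)) n

noncomputable def normalizedLimit (f' : ℂ → ℂ) (g : ℕ → ℂ → ℂ) (N : ℕ) (z : ℂ) : ℂ :=
  limUnder atTop fun n => normalizedComp f' g N n z

namespace IsEllipticAut

variable {f f' : ℂ → ℂ} {p : ℂ}

lemma inv_apply_eq (hf : IsEllipticAut f f' p) : f' p = p := by
  simpa [hf.apply_eq] using hf.invOn.1 hf.mem

lemma hdist_iterate_inv (hf : IsEllipticAut f f' p) (n : ℕ) {z w : ℂ} (hz : z ∈ unitDisc)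
    (hw : w ∈ unitDisc) : hdist (f'^[n] z) (f'^[n] w) = hdist z w :=
  hdist_apply_eq_of_leftInvOn (hf.isHolSelfMap_inv.iterate n) (hf.isHolSelfMap.iterate n)
    (hf.invOn.2.iterate hf.isHolSelfMap_inv.2 n) hz hw

lemma pseudoHypDist_iterate (hf : IsEllipticAut f f' p) (n : ℕ) {z w : ℂ} (hz : z ∈ unitDisc)
    (hw : w ∈ unitDisc) : pseudoHypDist (f^[n] z) (f^[n] w) = pseudoHypDist z w :=
  pseudoHypDist_apply_eq_of_leftInvOn (hf.isHolSelfMap.iterate n)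
    (hf.isHolSelfMap_inv.iterate n) (hf.invOn.1.iterate hf.isHolSelfMap.2 n) hz hw

lemma isHolSelfMap_normalizedComp (hf : IsEllipticAut f f' p) {g : ℕ → ℂ → ℂ}
    (hg : ∀ n, IsHolSelfMap (g n)) (N n : ℕ) : IsHolSelfMap (normalizedComp f' g N n) :=
  (hf.isHolSelfMap_inv.iterate n).comp (IsHolSelfMap.leftComp (fun k => hg (N + k)) n)

lemma hdist_normalizedComp_succ (hf : IsEllipticAut f f' p) {g : ℕ → ℂ → ℂ}
    (hg : ∀ n, IsHolSelfMap (g n)) (N n : ℕ) {z : ℂ} (hz : z ∈ unitDisc) :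
    hdist (normalizedComp f' g N (n + 1) z) (normalizedComp f' g N n z) =
      hdist (g (N + n) (leftComp (fun k => g (N + k)) n z))
        (f (leftComp (fun k => g (N + k)) n z)) := by
  set x := leftComp (fun k => g (N + k)) n z
  have hx : x ∈ unitDisc := (IsHolSelfMap.leftComp (fun k => hg (N + k)) n).2 hz
  have hgx := (hg (N + n)).2 hx
  calc hdist (f'^[n] (f' (g (N + n) x))) (f'^[n] x)
      = hdist (f'^[n] (f' (g (N + n) x))) (f'^[n] (f' (f x))) := by rw [hf.invOn.1 hx]
    _ = hdist (f' (g (N + n) x)) (f' (f x)) :=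
        hf.hdist_iterate_inv n (hf.isHolSelfMap_inv.2 hgx)
          (hf.isHolSelfMap_inv.2 (hf.isHolSelfMap.2 hx))
    _ = hdist (g (N + n) x) (f x) :=
        hdist_apply_eq_of_leftInvOn hf.isHolSelfMap_inv hf.isHolSelfMap hf.invOn.2 hgx
          (hf.isHolSelfMap.2 hx)

lemma hdist_normalizedComp_fixedPoint (hf : IsEllipticAut f f' p) {g : ℕ → ℂ → ℂ}
    (hg : ∀ n, IsHolSelfMap (g n)) (N n : ℕ) {z : ℂ} (hz : z ∈ unitDisc) :
    hdist (normalizedComp f' g N n z) p = hdist (leftComp (fun k => g (N + k)) n z) p := by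
  have hx := (IsHolSelfMap.leftComp (fun k => hg (N + k)) n).2 hz
  calc hdist (f'^[n] (leftComp (fun k => g (N + k)) n z)) p
      = hdist (f'^[n] (leftComp (fun k => g (N + k)) n z)) (f'^[n] p) := by
        rw [Function.iterate_fixed hf.inv_apply_eq]
    _ = _ := hf.hdist_iterate_inv n hx hf.mem

end IsEllipticAut

lemma normalizedComp_add (f' : ℂ → ℂ) (g : ℕ → ℂ → ℂ) (N n : ℕ) (z : ℂ) :
    normalizedComp f' g 0 (N + n) z =
      f'^[N] (normalizedComp f' g N n (leftComp g N z)) := by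
  simp only [normalizedComp, zero_add, Function.comp_apply, Function.iterate_add_apply]
  rw [leftComp_add]; rfl

lemma tendsto_mul_tsum_nat_add (ε : ℕ → ℝ) (C : ℝ) (N : ℕ) :
    Tendsto (fun n => C * ∑' k, ε (k + (n + N))) atTop (𝓝 0) := by
  simpa using ((tendsto_sum_nat_add ε).comp (tendsto_add_atTop_nat N)).const_mul C

namespace SummablyApprox

variable {g : ℕ → ℂ → ℂ} {f f' : ℂ → ℂ} {ε : ℕ → ℝ} {p : ℂ}

lemma sum_range_le_tsum (hg : SummablyApprox g f ε) (N n : ℕ) :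
    ∑ k ∈ Finset.range n, ε (N + k) ≤ ∑' k, ε k := by
  have h := Finset.sum_Ico_eq_sum_range ε N (N + n)
  rw [Nat.add_sub_cancel_left] at h
  rw [← h]
  exact hg.summable.sum_le_tsum _ fun k _ => hg.nonneg k

/-- `leftComp g n p` is `∑ ε`-close to `f^[n] p = p`. -/
lemma exists_hdist_leftComp_le (hg : SummablyApprox g f ε) (hf : IsEllipticAut f f' p) :
    ∃ B, ∀ N n, ∀ z ∈ unitDisc,
      hdist (leftComp (fun k => g (N + k)) n z) p ≤ hdist z p + B := by
  obtain ⟨C, hC⟩ := hg.hdist_le ‖p‖ hf.mem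
  refine ⟨max C 0 * ∑' k, ε k, fun N n z hz => ?_⟩
  set T := leftComp (fun k => g (N + k))
  have hT : ∀ n, IsHolSelfMap (T n) := IsHolSelfMap.leftComp fun k => hg.isHolSelfMap (N + k)
  have horbit : ∀ n, hdist (T n p) p ≤ max C 0 * ∑ k ∈ Finset.range n, ε (N + k) := by
    intro n
    induction n with
    | zero => simp [T, leftComp, hdist_self]
    | succ n ih =>
      have hstep : hdist (g (N + n) p) p ≤ max C 0 * ε (N + n) := by
        rw [← congrArg (hdist _) hf.apply_eq]
        exact (hC _ p hf.mem le_rfl).trans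
          (mul_le_mul_of_nonneg_right (le_max_left _ _) (hg.nonneg _))
      calc hdist (T (n + 1) p) p
          ≤ hdist (g (N + n) (T n p)) (g (N + n) p) + hdist (g (N + n) p) p :=
            hdist_triangle ((hT (n + 1)).2 hf.mem) ((hg.isHolSelfMap _).2 hf.mem) hf.mem
        _ ≤ hdist (T n p) p + max C 0 * ε (N + n) :=
            add_le_add (hdist_le_of_isHolSelfMap (hg.isHolSelfMap _) ((hT n).2 hf.mem) hf.mem)
              hstep
        _ ≤ max C 0 * ∑ k ∈ Finset.range (n + 1), ε (N + k) := by
            rw [Finset.sum_range_succ, mul_add]; linarith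
  calc hdist (T n z) p ≤ hdist (T n z) (T n p) + hdist (T n p) p :=
        hdist_triangle ((hT n).2 hz) ((hT n).2 hf.mem) hf.mem
    _ ≤ hdist z p + max C 0 * ∑' k, ε k :=
        add_le_add (hdist_le_of_isHolSelfMap (hT n) hz hf.mem)
          ((horbit n).trans (mul_le_mul_of_nonneg_left (hg.sum_range_le_tsum N n)
            (le_max_right _ _)))

lemma exists_norm_le (hg : SummablyApprox g f ε) (hf : IsEllipticAut f f' p) {r : ℝ}
    (hr : r < 1) : ∃ r' < 1, ∀ N n z, ‖z‖ ≤ r →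
      ‖leftComp (fun k => g (N + k)) n z‖ ≤ r' ∧ ‖normalizedComp f' g N n z‖ ≤ r' := by
  obtain ⟨B, hB⟩ := hg.exists_hdist_leftComp_le hf
  obtain ⟨R, hR⟩ := exists_hdist_le_of_norm_le hf.mem hr
  obtain ⟨r', hr', hr'R⟩ := exists_norm_le_of_hdist_le hf.mem (R + B)
  refine ⟨r', hr', fun N n z hzr => ?_⟩
  have hz := mem_unitDisc_of_norm_le hzr hr
  have hT : hdist (leftComp (fun k => g (N + k)) n z) p ≤ R + B := by
    linarith [hB N n z hz, hR z hz hzr]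
  have hTD := (IsHolSelfMap.leftComp (fun k => hg.isHolSelfMap (N + k)) n).2 hz
  refine ⟨hr'R _ hTD hT, hr'R _ ((hf.isHolSelfMap_normalizedComp hg.isHolSelfMap N n).2 hz) ?_⟩
  rwa [hf.hdist_normalizedComp_fixedPoint hg.isHolSelfMap N n hz]

lemma exists_dist_normalizedComp_succ_le (hg : SummablyApprox g f ε) (hf : IsEllipticAut f f' p)
    {r : ℝ} (hr : r < 1) : ∃ C, ∀ N n z, ‖z‖ ≤ r →
      dist (normalizedComp f' g N n z) (normalizedComp f' g N (n + 1) z) ≤ C * ε (N + n) := by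
  obtain ⟨r', hr', hbound⟩ := hg.exists_norm_le hf hr
  obtain ⟨C, hC⟩ := hg.hdist_le r' hr'
  refine ⟨2 * C, fun N n z hzr => ?_⟩
  have hz := mem_unitDisc_of_norm_le hzr hr
  have hG := hf.isHolSelfMap_normalizedComp hg.isHolSelfMap N
  have hTz := mem_unitDisc_of_norm_le (hbound N n z hzr).1 hr'
  calc dist (normalizedComp f' g N n z) (normalizedComp f' g N (n + 1) z)
      ≤ 2 * hdist (normalizedComp f' g N (n + 1) z) (normalizedComp f' g N n z) := by
        rw [dist_comm]; exact dist_le_two_mul_hdist ((hG _).2 hz) ((hG _).2 hz)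
    _ ≤ 2 * C * ε (N + n) := by
        rw [hf.hdist_normalizedComp_succ hg.isHolSelfMap N n hz, mul_assoc]
        exact mul_le_mul_of_nonneg_left (hC _ _ hTz (hbound N n z hzr).1) two_pos.le

lemma exists_dist_normalizedLimit_le (hg : SummablyApprox g f ε) (hf : IsEllipticAut f f' p)
    {r : ℝ} (hr : r < 1) : ∃ C, ∀ N n z, ‖z‖ ≤ r →
      Tendsto (fun n => normalizedComp f' g N n z) atTop (𝓝 (normalizedLimit f' g N z)) ∧
      dist (normalizedComp f' g N n z) (normalizedLimit f' g N z) ≤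
        C * ∑' k, ε (k + (n + N)) := by
  obtain ⟨C, hC⟩ := hg.exists_dist_normalizedComp_succ_le hf hr
  refine ⟨C, fun N n z hzr => ?_⟩
  have hsum : Summable fun k => C * ε (N + k) :=
    ((summable_nat_add_iff N).mpr hg.summable |>.congr fun k => by rw [add_comm]).mul_left C
  have hlim := (cauchySeq_of_dist_le_of_summable _ (fun k => hC N k z hzr) hsum).tendsto_limUnder
  refine ⟨hlim,
    (dist_le_tsum_of_dist_le_of_tendsto _ (fun k => hC N k z hzr) hsum hlim n).trans_eq ?_⟩
  rw [tsum_mul_left]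
  congr 2 with k
  congr 1
  omega

lemma isHolSelfMap_normalizedLimit (hg : SummablyApprox g f ε) (hf : IsEllipticAut f f' p)
    (N : ℕ) : IsHolSelfMap (normalizedLimit f' g N) := by
  have hG := hf.isHolSelfMap_normalizedComp hg.isHolSelfMap N
  have hlu : TendstoLocallyUniformlyOn (normalizedComp f' g N) (normalizedLimit f' g N) atTop
      unitDisc := by
    refine tendstoLocallyUniformlyOn_unitDisc_of_dist_le fun r hr => ?_
    obtain ⟨C, hC⟩ := hg.exists_dist_normalizedLimit_le hf hr
    exact ⟨_, tendsto_mul_tsum_nat_add ε C N, fun n z hzr => by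
      rw [dist_comm]; exact (hC N n z hzr).2⟩
  refine ⟨hlu.differentiableOn (Eventually.of_forall fun n => (hG n).1) isOpen_unitDisc,
    fun z hz => ?_⟩
  obtain ⟨r', hr', hbound⟩ := hg.exists_norm_le hf hz
  obtain ⟨C, hC⟩ := hg.exists_dist_normalizedLimit_le hf hz
  have hlim := ((hC N 0 z le_rfl).1).norm
  exact (le_of_tendsto' hlim fun n => (hbound N n z le_rfl).2).trans_lt hr'

end SummablyApprox

lemma exists_ne_leftComp {g : ℕ → ℂ → ℂ} (hg : ∀ n, IsHolSelfMap (g n))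
    (hnc : ∀ n, ∃ u ∈ unitDisc, ∃ v ∈ unitDisc, g n u ≠ g n v) (N : ℕ) :
    ∃ u ∈ unitDisc, ∃ v ∈ unitDisc, leftComp g N u ≠ leftComp g N v := by
  induction N with
  | zero => exact exists_mem_unitDisc_ne
  | succ N ih =>
    obtain ⟨u, hu, v, hv, huv⟩ := exists_ne_comp (hg N).1 (IsHolSelfMap.leftComp hg N) (hnc N) ih
    exact ⟨u, hu, v, hv, huv⟩

lemma IsEllipticAut.iterate_normalizedComp {f f' : ℂ → ℂ} {p : ℂ} (hf : IsEllipticAut f f' p)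
    {g : ℕ → ℂ → ℂ} (hg : ∀ n, IsHolSelfMap (g n)) (n : ℕ) {z : ℂ} (hz : z ∈ unitDisc) :
    f^[n] (normalizedComp f' g 0 n z) = leftComp g n z := by
  have h := (hf.invOn.2.iterate hf.isHolSelfMap_inv.2 n) ((IsHolSelfMap.leftComp hg n).2 hz)
  simpa [normalizedComp] using h

namespace SummablyApprox

variable {g : ℕ → ℂ → ℂ} {f f' : ℂ → ℂ} {ε : ℕ → ℝ} {p : ℂ}

lemma exists_normalizedLimit_ne (hg : SummablyApprox g f ε) (hf : IsEllipticAut f f' p) :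
    ∃ N, ∃ u ∈ unitDisc, ∃ v ∈ unitDisc, normalizedLimit f' g N u ≠ normalizedLimit f' g N v := by
  obtain ⟨C, hC⟩ := hg.exists_dist_normalizedLimit_le hf (r := 1 / 2) (by norm_num)
  obtain ⟨N, hN⟩ := ((tendsto_mul_tsum_nat_add ε C 0).eventually (gt_mem_nhds
    (by norm_num : (0 : ℝ) < 1 / 4))).exists
  have hclose : ∀ z : ℂ, ‖z‖ ≤ 1 / 2 → dist z (normalizedLimit f' g N z) < 1 / 4 := fun z hz => by
    have := (hC N 0 z hz).2
    simp only [zero_add] at this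
    exact this.trans_lt hN
  refine ⟨N, 0, zero_mem_unitDisc, 1 / 2, by norm_num [unitDisc], fun heq => ?_⟩
  have h0 := hclose 0 (by norm_num)
  have h1 := hclose (1 / 2) (by norm_num)
  rw [← heq, dist_comm] at h1
  have := dist_triangle (0 : ℂ) (normalizedLimit f' g N 0) (1 / 2)
  norm_num [dist_eq_norm] at this h0 h1
  linarith

lemma normalizedLimit_zero_eq (hg : SummablyApprox g f ε) (hf : IsEllipticAut f f' p) (N : ℕ)
    {z : ℂ} (hz : z ∈ unitDisc) :
    normalizedLimit f' g 0 z = f'^[N] (normalizedLimit f' g N (leftComp g N z)) := by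
  have hw := (IsHolSelfMap.leftComp hg.isHolSelfMap N).2 hz
  obtain ⟨C, hC⟩ := hg.exists_dist_normalizedLimit_le hf hz
  obtain ⟨C', hC'⟩ := hg.exists_dist_normalizedLimit_le hf hw
  have h₁ : Tendsto (fun n => normalizedComp f' g 0 (N + n) z) atTop
      (𝓝 (normalizedLimit f' g 0 z)) := by
    simpa only [Function.comp_def, add_comm _ N] using
      (hC 0 0 z le_rfl).1.comp (tendsto_add_atTop_nat N)
  have hcont := ((hf.isHolSelfMap_inv.iterate N).1.continuousOn.continuousWithinAt
    ((hg.isHolSelfMap_normalizedLimit hf N).2 hw)).tendsto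
  have h₂ := hcont.comp (tendsto_nhdsWithin_iff.2 ⟨(hC' N 0 _ le_rfl).1,
    Eventually.of_forall fun n => (hf.isHolSelfMap_normalizedComp hg.isHolSelfMap N n).2 hw⟩)
  simp only [Function.comp_def, ← normalizedComp_add] at h₂
  exact tendsto_nhds_unique h₁ h₂

lemma exists_ne_normalizedLimit_zero (hg : SummablyApprox g f ε) (hf : IsEllipticAut f f' p)
    (hnc : ∀ n, ∃ u ∈ unitDisc, ∃ v ∈ unitDisc, g n u ≠ g n v) :
    ∃ u ∈ unitDisc, ∃ v ∈ unitDisc, normalizedLimit f' g 0 u ≠ normalizedLimit f' g 0 v := by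
  obtain ⟨N, hN⟩ := hg.exists_normalizedLimit_ne hf
  have hF := hg.isHolSelfMap_normalizedLimit hf N
  have hT := IsHolSelfMap.leftComp hg.isHolSelfMap N
  obtain ⟨u, hu, v, hv, huv⟩ :=
    exists_ne_comp hF.1 hT hN (exists_ne_leftComp hg.isHolSelfMap hnc N)
  refine ⟨u, hu, v, hv, fun heq => huv ?_⟩
  rw [hg.normalizedLimit_zero_eq hf N hu, hg.normalizedLimit_zero_eq hf N hv] at heq
  exact (hf.invOn.2.iterate hf.isHolSelfMap_inv.2 N).injOn (hF.2 (hT.2 hu)) (hF.2 (hT.2 hv)) heq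

theorem tendstoLocallyUniformlyOn_leftComp (hg : SummablyApprox g f ε)
    (hf : IsEllipticAut f f' p) {φ : ℕ → ℕ} (hφ : Tendsto φ atTop atTop) {j : ℕ}
    (hj : ∀ n, ∀ z ∈ unitDisc, f^[φ n] z = f^[j] z) :
    TendstoLocallyUniformlyOn (fun n z => leftComp g (φ n) z)
      (fun z => f^[j] (normalizedLimit f' g 0 z)) atTop unitDisc := by
  refine tendstoLocallyUniformlyOn_unitDisc_of_dist_le fun r hr => ?_
  obtain ⟨r', hr', hbound⟩ := hg.exists_norm_le hf hr
  obtain ⟨C, hC⟩ := hg.exists_dist_normalizedLimit_le hf hr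
  refine ⟨fun n => 2 * (C * ∑' k, ε (k + (φ n + 0))) / (1 - r'), by
    simpa using (((tendsto_mul_tsum_nat_add ε C 0).comp hφ).const_mul 2).div_const (1 - r'),
    fun n z hzr => ?_⟩
  have hz := mem_unitDisc_of_norm_le hzr hr
  set G := normalizedComp f' g 0 (φ n) z
  set F := normalizedLimit f' g 0 z
  have hG : G ∈ unitDisc := (hf.isHolSelfMap_normalizedComp hg.isHolSelfMap 0 (φ n)).2 hz
  have hF : F ∈ unitDisc := (hg.isHolSelfMap_normalizedLimit hf 0).2 hz
  have hj' := (hf.isHolSelfMap.iterate j).2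
  rw [← hf.iterate_normalizedComp hg.isHolSelfMap (φ n) hz, hj _ _ hG, dist_eq_norm]
  calc ‖f^[j] F - f^[j] G‖ ≤ 2 * pseudoHypDist (f^[j] F) (f^[j] G) :=
        norm_sub_le_two_mul_pseudoHypDist (hj' hF) (hj' hG)
    _ = 2 * pseudoHypDist F G := by rw [hf.pseudoHypDist_iterate j hF hG]
    _ ≤ 2 * (‖F - G‖ / (1 - ‖G‖)) :=
        mul_le_mul_of_nonneg_left (pseudoHypDist_le_norm_sub_div hF.out.le hG) two_pos.le
    _ ≤ 2 * (C * ∑' k, ε (k + (φ n + 0))) / (1 - r') := by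
        rw [mul_div_assoc]
        refine mul_le_mul_of_nonneg_left ?_ two_pos.le
        rw [← dist_eq_norm, dist_comm]
        exact div_le_div₀ (dist_nonneg.trans (hC 0 (φ n) z hzr).2) (hC 0 (φ n) z hzr).2
          (by linarith) (by linarith [(hbound 0 (φ n) z hzr).2])

end SummablyApprox

lemma invOn_iterate_pred {f : ℂ → ℂ} {m : ℕ} (hm : 1 ≤ m)
    (horder : ∀ z ∈ unitDisc, f^[m] z = z) : InvOn f^[m - 1] f unitDisc unitDisc := by
  constructor <;> intro z hz
  · rw [← Function.iterate_succ_apply, Nat.succ_eq_add_one, Nat.sub_add_cancel hm, horder z hz]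
  · rw [← Function.iterate_succ_apply' f, Nat.succ_eq_add_one, Nat.sub_add_cancel hm,
      horder z hz]

lemma iterate_mul_add_apply {f : ℂ → ℂ} {m : ℕ} (horder : ∀ z ∈ unitDisc, f^[m] z = z)
    (n j : ℕ) {z : ℂ} (hz : z ∈ unitDisc) : f^[n * m + j] z = f^[j] z := by
  rw [add_comm, Function.iterate_add_apply, mul_comm, Function.iterate_mul,
    Function.iterate_fixed (horder z hz)]

theorem stability_elliptic_finite_order_left_general
    (f : ℂ → ℂ) (m : ℕ)
    (hf : DifferentiableOn ℂ f unitDisc) (hfmap : MapsTo f unitDisc unitDisc)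
    (hfix : ∃ p ∈ unitDisc, f p = p)
    (hm : 1 ≤ m) (horder : ∀ z ∈ unitDisc, f^[m] z = z)
    (fseq : ℕ → ℂ → ℂ)
    (hholo : ∀ n, DifferentiableOn ℂ (fseq n) unitDisc)
    (hself : ∀ n, MapsTo (fseq n) unitDisc unitDisc)
    (hnonconst : ∀ n, ∃ z ∈ unitDisc, ∃ w ∈ unitDisc, fseq n z ≠ fseq n w)
    (a b : ℂ) (ha : a ∈ unitDisc) (hb : b ∈ unitDisc) (hab : a ≠ b)
    (hsa : Summable fun n => hdist (fseq n a) (f a))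
    (hsb : Summable fun n => hdist (fseq n b) (f b)) :
    ∃ F : ℂ → ℂ, DifferentiableOn ℂ F unitDisc ∧ MapsTo F unitDisc unitDisc ∧
      (∃ z ∈ unitDisc, ∃ w ∈ unitDisc, F z ≠ F w) ∧
      ∀ j < m, TendstoLocallyUniformlyOn (fun n z => leftComp fseq (n * m + j) z)
        (fun z => f^[j] (F z)) atTop unitDisc := by
  obtain ⟨p, hp, hfp⟩ := hfix
  have hfhol : IsHolSelfMap f := ⟨hf, hfmap⟩
  have hinv := invOn_iterate_pred hm horder
  have hell : IsEllipticAut f f^[m - 1] p := ⟨hfhol, hfhol.iterate _, hinv, hp, hfp⟩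
  have hg : ∀ n, IsHolSelfMap (fseq n) := fun n => ⟨hholo n, hself n⟩
  have happrox : SummablyApprox fseq f fun n => hdist (fseq n a) (f a) + hdist (fseq n b) (f b) :=
    { isHolSelfMap := hg
      nonneg := fun n => add_nonneg (hdist_nonneg (hself n ha) (hfmap ha))
        (hdist_nonneg (hself n hb) (hfmap hb))
      summable := hsa.add hsb
      hdist_le := fun r hr => by
        obtain ⟨C, hC⟩ := exists_hdist_le_mul_of_invOn hfhol (hfhol.iterate _) hinv ha hb hab hr
        exact ⟨C, fun n => hC (fseq n) (hg n)⟩ }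
  have hF := happrox.isHolSelfMap_normalizedLimit hell 0
  refine ⟨_, hF.1, hF.2, happrox.exists_ne_normalizedLimit_zero hell hnonconst, fun j _ => ?_⟩
  refine happrox.tendstoLocallyUniformlyOn_leftComp hell ?_ fun n z hz =>
    iterate_mul_add_apply horder n j hz
  exact tendsto_atTop_mono (fun n => (Nat.le_mul_of_pos_right n hm).trans (Nat.le_add_right _ j))
    tendsto_id

/-- **Stability at an elliptic transformation of finite order, left compositions.**
Here "f is an elliptic Möbius transformation fixing 𝔻 of finite order m" is encoded as:
f is a conformal automorphism of 𝔻 with a fixed point in 𝔻, f is not the identity on 𝔻,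
`f^[m]` is the identity on 𝔻, and m is least with this property. -/
theorem stability_elliptic_finite_order_left
    (f : ℂ → ℂ) (m : ℕ)
    (hf : DifferentiableOn ℂ f unitDisc) (hfmap : MapsTo f unitDisc unitDisc)
    (hfbij : BijOn f unitDisc unitDisc)
    (hfix : ∃ p ∈ unitDisc, f p = p)
    (hnotid : ∃ z ∈ unitDisc, f z ≠ z)
    (hm : 1 ≤ m) (horder : ∀ z ∈ unitDisc, f^[m] z = z)
    (hleast : ∀ j, 1 ≤ j → j < m → ∃ z ∈ unitDisc, f^[j] z ≠ z)
    (fseq : ℕ → ℂ → ℂ)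
    (hholo : ∀ n, DifferentiableOn ℂ (fseq n) unitDisc)
    (hself : ∀ n, MapsTo (fseq n) unitDisc unitDisc)
    (hnonconst : ∀ n, ∃ z ∈ unitDisc, ∃ w ∈ unitDisc, fseq n z ≠ fseq n w)
    (a b : ℂ) (ha : a ∈ unitDisc) (hb : b ∈ unitDisc) (hab : a ≠ b)
    (hsa : Summable fun n => hdist (fseq n a) (f a))
    (hsb : Summable fun n => hdist (fseq n b) (f b)) :
    ∃ F : ℂ → ℂ, DifferentiableOn ℂ F unitDisc ∧ MapsTo F unitDisc unitDisc ∧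
      (∃ z ∈ unitDisc, ∃ w ∈ unitDisc, F z ≠ F w) ∧
      ∀ j < m, TendstoLocallyUniformlyOn (fun n z => leftComp fseq (n * m + j) z)
        (fun z => f^[j] (F z)) atTop unitDisc :=
  stability_elliptic_finite_order_left_general f m hf hfmap hfix hm horder fseq hholo hself
    hnonconst a b ha hb hab hsa hsb
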